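/- Let χ ∈ C^∞([-1,1],[0,1]) with χ(y) = 1 for |y| ≥ 2/3 and χ(y) = 0 for |y| ≤ 1/3, and let φ ∈ C^∞([-1,1],[0,1]) with φ(±1) = 0 and |φ'(y)| = 1 for |y| ≥ 1/4. Then there exists a constant C > 0 (depending only on χ and φ) such that for every ε ∈ (0,1) and every continuously differentiable V : [0,∞) → ℝ with Σ_{α=0}^{1} ∫₀^∞ (1+z²)³ |V^{(α)}(z)|² dz < ∞, the function f(y) := − (χ''(y)/φ(y)²) (φ(y)/√ε)² V(φ(y)/√ε) − 2 (χ'(y)/φ(y)³) φ'(y) (φ(y)/√ε)³ V'(φ(y)/√ε) (extended by 0 where χ' = χ'' = 0) satisfies (∫_{-1}^{1} f(y)² dy)^{1/2} ≤ C ε^{1/4} (Σ_{α=0}^{1} ∫₀^∞ (1+z²)³ |V^{(α)}(z)|² dz)^{1/2}. -/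

import Mathlib

open MeasureTheory Set Finset


/-- constant on an open set ⇒ first and second derivatives vanish there -/
lemma deriv2_zero_of_const_on (f : ℝ → ℝ) (c : ℝ) (O : Set ℝ) (hO : IsOpen O)
    (hconst : ∀ y ∈ O, f y = c) :
    ∀ y ∈ O, deriv f y = 0 ∧ iteratedDeriv 2 f y = 0 := by
  have h1 : ∀ y ∈ O, deriv f y = 0 := by
    intro y hy
    have hev : f =ᶠ[nhds y] fun _ => c :=
      Filter.eventuallyEq_of_mem (hO.mem_nhds hy) (fun z hz => hconst z hz)
    rw [hev.deriv_eq, deriv_const]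
  intro y hy
  refine ⟨h1 y hy, ?_⟩
  have hev : deriv f =ᶠ[nhds y] fun _ => 0 :=
    Filter.eventuallyEq_of_mem (hO.mem_nhds hy) (fun z hz => h1 z hz)
  rw [show (2:ℕ) = 1 + 1 from rfl, iteratedDeriv_succ, iteratedDeriv_one,
    hev.deriv_eq, deriv_const]

/-- a function with |f'| ≡ 1 on an interval is affine with slope ±1 -/
lemma affine_of_abs_deriv_one (f : ℝ → ℝ) (p q : ℝ) (hpq : p < q)
    (hc : ContinuousOn f (Icc p q))
    (hd : ∀ y ∈ Ioo p q, DifferentiableAt ℝ f y)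
    (hdc : ContinuousOn (deriv f) (Ioo p q))
    (hpm : ∀ y ∈ Ioo p q, deriv f y = 1 ∨ deriv f y = -1) :
    (∀ y ∈ Icc p q, f y = f q + (y - q)) ∨ (∀ y ∈ Icc p q, f y = f q - (y - q)) := by
  have key : ∀ c : ℝ, (∀ y ∈ Ioo p q, deriv f y = c) →
      ∀ y ∈ Icc p q, f y = f q + c * (y - q) := by
    intro c hcd y hy
    set g : ℝ → ℝ := fun y => f y - c * y with hg
    have hgd : ∀ y ∈ Ioo p q, HasDerivAt g 0 y := by
      intro y hy
      have h2 : HasDerivAt (fun x : ℝ => c * x) c y := by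
        simpa using (hasDerivAt_id y).const_mul c
      have h3 := ((hd y hy).hasDerivAt).sub h2
      rw [hcd y hy] at h3
      rw [sub_self] at h3; exact h3
    have hgc : ContinuousOn g (Icc p q) :=
      hc.sub ((continuous_const.mul continuous_id).continuousOn)
    have hgdiff : DifferentiableOn ℝ g (interior (Icc p q)) := by
      rw [interior_Icc]
      exact fun y hy => (hgd y hy).differentiableAt.differentiableWithinAt
    have hmono : MonotoneOn g (Icc p q) := by
      refine monotoneOn_of_deriv_nonneg (convex_Icc p q) hgc hgdiff ?_
      rw [interior_Icc]
      intro x hx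
      rw [(hgd x hx).deriv]
    have hanti : AntitoneOn g (Icc p q) := by
      refine antitoneOn_of_deriv_nonpos (convex_Icc p q) hgc hgdiff ?_
      rw [interior_Icc]
      intro x hx
      rw [(hgd x hx).deriv]
    have hqm : q ∈ Icc p q := ⟨le_of_lt hpq, le_rfl⟩
    have h1 : g y ≤ g q := hmono hy hqm hy.2
    have h2 : g q ≤ g y := hanti hy hqm hy.2
    have : g y = g q := le_antisymm h1 h2
    simp only [hg] at this
    linarith [this]
  by_cases hA : ∀ y ∈ Ioo p q, deriv f y = 1
  · left
    intro y hy
    have := key 1 hA y hy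
    linarith
  · push_neg at hA
    obtain ⟨y₀, hy₀, hy₀1⟩ := hA
    have hy₀m : deriv f y₀ = -1 := (hpm y₀ hy₀).resolve_left hy₀1
    have hall : ∀ y ∈ Ioo p q, deriv f y = -1 := by
      by_contra hB
      push_neg at hB
      obtain ⟨y₁, hy₁, hy₁1⟩ := hB
      have hy₁p : deriv f y₁ = 1 := (hpm y₁ hy₁).resolve_right hy₁1
      have hu : IsOpen (Ioo p q ∩ deriv f ⁻¹' Iio 0) :=
        hdc.isOpen_inter_preimage isOpen_Ioo isOpen_Iio
      have hv : IsOpen (Ioo p q ∩ deriv f ⁻¹' Ioi 0) :=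
        hdc.isOpen_inter_preimage isOpen_Ioo isOpen_Ioi
      have hsub : Ioo p q ⊆ (Ioo p q ∩ deriv f ⁻¹' Iio 0) ∪ (Ioo p q ∩ deriv f ⁻¹' Ioi 0) := by
        intro y hy
        rcases hpm y hy with h | h
        · right; exact ⟨hy, by simp [h]⟩
        · left; exact ⟨hy, by simp [h]⟩
      obtain ⟨z, hz, ⟨-, hz1⟩, ⟨-, hz2⟩⟩ :=
        (isPreconnected_Ioo : IsPreconnected (Ioo p q)) _ _ hu hv hsub
          ⟨y₀, hy₀, hy₀, by simp [hy₀m]⟩ ⟨y₁, hy₁, hy₁, by simp [hy₁p]⟩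
      have h1 : deriv f z < 0 := hz1
      have h2 : 0 < deriv f z := hz2
      linarith
    right
    intro y hy
    have := key (-1) hall y hy
    linarith

/-- pointwise square bound -/
lemma sq_bound (A B D p v w M z : ℝ) (hM : 1 ≤ M) (hA : |A| ≤ M) (hB : |B| ≤ M)
    (hD : |D| ≤ 1) (hp : 3/10 ≤ p) (hz : 0 ≤ z) :
    (-(A / p ^ 2) * z ^ 2 * v - 2 * (B / p ^ 3) * D * z ^ 3 * w) ^ 2
      ≤ 11552 * M ^ 2 * ((1 + z ^ 2) ^ 3 * v ^ 2 + (1 + z ^ 2) ^ 3 * w ^ 2) := by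
  have hp0 : (0:ℝ) < p := by linarith
  have hM0 : (0:ℝ) ≤ M := by linarith
  have hp2 : (9/100 : ℝ) ≤ p ^ 2 := by nlinarith
  have hp3 : (27/1000 : ℝ) ≤ p ^ 3 := by nlinarith
  have ha1 : |A / p ^ 2| ≤ 12 * M := by
    rw [abs_div, abs_of_pos (by positivity : (0:ℝ) < p ^ 2)]
    calc |A| / p ^ 2 ≤ M / (9/100) := by
          apply div_le_div₀ hM0 hA (by norm_num) hp2
      _ ≤ 12 * M := by linarith
  have ha2 : |2 * (B / p ^ 3) * D| ≤ 76 * M := by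
    rw [abs_mul, abs_mul, abs_div, abs_of_pos (by positivity : (0:ℝ) < p ^ 3)]
    have h1 : |B| / p ^ 3 ≤ M / (27/1000) := div_le_div₀ hM0 hB (by norm_num) hp3
    have h2 : |(2:ℝ)| = 2 := by norm_num
    calc |(2:ℝ)| * (|B| / p ^ 3) * |D| ≤ 2 * (M / (27/1000)) * 1 := by
          rw [h2]; apply mul_le_mul (by linarith) hD (abs_nonneg D) (by positivity)
      _ ≤ 76 * M := by linarith
  set X := A / p ^ 2 with hX
  set Y := 2 * (B / p ^ 3) * D with hY
  have hX2 : X ^ 2 ≤ 144 * M ^ 2 := by nlinarith [abs_nonneg X, sq_abs X]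
  have hY2 : Y ^ 2 ≤ 5776 * M ^ 2 := by nlinarith [abs_nonneg Y, sq_abs Y]
  have hz4 : z ^ 4 ≤ (1 + z ^ 2) ^ 3 := by nlinarith [pow_nonneg hz 2, pow_nonneg hz 4, pow_nonneg hz 6]
  have hz6 : z ^ 6 ≤ (1 + z ^ 2) ^ 3 := by nlinarith [pow_nonneg hz 2, pow_nonneg hz 4, pow_nonneg hz 6]
  have hXz : X ^ 2 * (z ^ 4 * v ^ 2) ≤ 144 * M ^ 2 * ((1 + z ^ 2) ^ 3 * v ^ 2) :=
    mul_le_mul hX2 (mul_le_mul_of_nonneg_right hz4 (sq_nonneg v)) (by positivity) (by positivity)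
  have hYw : Y ^ 2 * (z ^ 6 * w ^ 2) ≤ 5776 * M ^ 2 * ((1 + z ^ 2) ^ 3 * w ^ 2) :=
    mul_le_mul hY2 (mul_le_mul_of_nonneg_right hz6 (sq_nonneg w)) (by positivity) (by positivity)
  have hv0 : (0:ℝ) ≤ M ^ 2 * ((1 + z ^ 2) ^ 3 * v ^ 2) := by positivity
  nlinarith [sq_nonneg (X * z ^ 2 * v - Y * z ^ 3 * w), hXz, hYw, hv0]


/-- The boundary-layer source of the technical profile equation:
`f(y) = -(χ''(y)/φ(y)²)(φ(y)/√ε)² V(φ(y)/√ε)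
 - 2(χ'(y)/φ(y)³)φ'(y)(φ(y)/√ε)³ V'(φ(y)/√ε)`
(extended by `0` where `χ' = χ'' = 0`, automatic since division by zero is zero). -/
noncomputable def blSource (χ φ V : ℝ → ℝ) (ε y : ℝ) : ℝ :=
  -(iteratedDeriv 2 χ y / (φ y) ^ 2) * (φ y / Real.sqrt ε) ^ 2 *
      V (φ y / Real.sqrt ε)
    - 2 * (deriv χ y / (φ y) ^ 3) * deriv φ y * (φ y / Real.sqrt ε) ^ 3 *
      deriv V (φ y / Real.sqrt ε)

/-- estimate (4.21) in the proof of Lemma 4.3 of the paper: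
the `L²(-1,1)` norm of the boundary-layer source is bounded by
`C ε^{1/4} |V|_{H^{1,3}(ℝ₊)}`, with `C` depending only on `χ` and `φ`. -/
theorem blSource_L2_estimate
    (χ : ℝ → ℝ) (hχs : ContDiffOn ℝ (⊤ : ℕ∞) χ (Set.Icc (-1:ℝ) 1))
    (hχrange : ∀ y ∈ Set.Icc (-1:ℝ) 1, χ y ∈ Set.Icc (0:ℝ) 1)
    (hχ1 : ∀ y ∈ Set.Icc (-1:ℝ) 1, 2/3 ≤ |y| → χ y = 1)
    (hχ0 : ∀ y ∈ Set.Icc (-1:ℝ) 1, |y| ≤ 1/3 → χ y = 0)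
    (φ : ℝ → ℝ) (hφs : ContDiffOn ℝ (⊤ : ℕ∞) φ (Set.Icc (-1:ℝ) 1))
    (hφrange : ∀ y ∈ Set.Icc (-1:ℝ) 1, φ y ∈ Set.Icc (0:ℝ) 1)
    (hφm1 : φ (-1) = 0) (hφ1 : φ 1 = 0)
    (hφ' : ∀ y ∈ Set.Icc (-1:ℝ) 1, 1/4 ≤ |y| → |deriv φ y| = 1) :
    ∃ C > (0:ℝ), ∀ ε ∈ Set.Ioo (0:ℝ) 1, ∀ V : ℝ → ℝ,
      ContDiffOn ℝ 1 V (Set.Ici (0:ℝ)) →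
      (∀ α < 2, IntegrableOn
        (fun z => (1 + z ^ 2) ^ 3 * (iteratedDeriv α V z) ^ 2) (Set.Ioi (0:ℝ))) →
      Real.sqrt (∫ y in (-1:ℝ)..1, (blSource χ φ V ε y) ^ 2) ≤
        C * ε ^ ((1:ℝ)/4) *
          Real.sqrt (∑ α ∈ Finset.range 2,
            ∫ z in Set.Ioi (0:ℝ), (1 + z ^ 2) ^ 3 * (iteratedDeriv α V z) ^ 2) := by
  have hIoo : Set.Ioo (-1:ℝ) 1 ⊆ Set.Icc (-1:ℝ) 1 := Set.Ioo_subset_Icc_self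
  have hχo : ContDiffOn ℝ (⊤:ℕ∞) χ (Set.Ioo (-1:ℝ) 1) := hχs.mono hIoo
  have hφo : ContDiffOn ℝ (⊤:ℕ∞) φ (Set.Ioo (-1:ℝ) 1) := hφs.mono hIoo
  have hχd1 : ContinuousOn (deriv χ) (Set.Ioo (-1:ℝ) 1) :=
    hχo.continuousOn_deriv_of_isOpen isOpen_Ioo (by exact_mod_cast le_top)
  have e2 : iteratedDeriv 2 χ = deriv (deriv χ) := by
    rw [show (2:ℕ) = 1 + 1 from rfl, iteratedDeriv_succ, iteratedDeriv_one]
  have hχd2 : ContinuousOn (iteratedDeriv 2 χ) (Set.Ioo (-1:ℝ) 1) := by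
    rw [e2]
    exact (hχo.deriv_of_isOpen (m := (⊤:ℕ∞)) isOpen_Ioo (by exact_mod_cast le_top)).continuousOn_deriv_of_isOpen isOpen_Ioo (by exact_mod_cast le_top)
  -- bound on χ derivatives on [-7/10, 7/10]
  have hKsub : Set.Icc (-7/10:ℝ) (7/10) ⊆ Set.Ioo (-1:ℝ) 1 := by
    intro y hy; exact ⟨by linarith [hy.1], by linarith [hy.2]⟩
  obtain ⟨M₁, hM₁⟩ := (isCompact_Icc (a := (-7/10:ℝ)) (b := 7/10)).exists_bound_of_continuousOn
    (hχd1.mono hKsub)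
  obtain ⟨M₂, hM₂⟩ := (isCompact_Icc (a := (-7/10:ℝ)) (b := 7/10)).exists_bound_of_continuousOn
    (hχd2.mono hKsub)
  set M : ℝ := max (max M₁ M₂) 1 with hMdef
  have hM : (1:ℝ) ≤ M := le_max_right _ _
  have hMd : ∀ x ∈ Set.Icc (-7/10:ℝ) (7/10), |deriv χ x| ≤ M ∧ |iteratedDeriv 2 χ x| ≤ M := by
    intro x hx
    constructor
    · exact le_trans (by simpa using hM₁ x hx) (le_trans (le_max_left _ _) (le_max_left _ _))
    · exact le_trans (by simpa using hM₂ x hx) (le_trans (le_max_right _ _) (le_max_left _ _))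
  -- φ is affine on the two outer intervals
  have hφc : ContinuousOn φ (Set.Icc (-1:ℝ) 1) := hφs.continuousOn
  have hφdiff : ∀ y ∈ Set.Ioo (-1:ℝ) 1, DifferentiableAt ℝ φ y := fun y hy =>
    ((hφo.differentiableOn (by simp)).differentiableAt (isOpen_Ioo.mem_nhds hy))
  have hφdc : ContinuousOn (deriv φ) (Set.Ioo (-1:ℝ) 1) :=
    hφo.continuousOn_deriv_of_isOpen isOpen_Ioo (by exact_mod_cast le_top)
  have hR : ∀ y ∈ Set.Icc (1/4:ℝ) 1, φ y = 1 - y := by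
    have hsub : Set.Icc (1/4:ℝ) 1 ⊆ Set.Icc (-1:ℝ) 1 := Icc_subset_Icc (by norm_num) le_rfl
    have hsub' : Set.Ioo (1/4:ℝ) 1 ⊆ Set.Ioo (-1:ℝ) 1 := Ioo_subset_Ioo (by norm_num) le_rfl
    have h := affine_of_abs_deriv_one φ (1/4) 1 (by norm_num)
      (hφc.mono hsub) (fun y hy => hφdiff y (hsub' hy)) (hφdc.mono hsub')
      (fun y hy => by
        have := hφ' y (hsub (Ioo_subset_Icc_self hy)) (by
          rw [abs_of_pos (by linarith [hy.1] : (0:ℝ) < y)]; linarith [hy.1])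
        rcases abs_eq (by norm_num : (0:ℝ) ≤ 1) |>.mp this with h | h
        · exact Or.inl h
        · exact Or.inr h)
    rcases h with h | h
    · exfalso
      have h4 : φ (1/4) = φ 1 + (1/4 - 1) := h (1/4) ⟨le_rfl, by norm_num⟩
      have := (hφrange (1/4) ⟨by norm_num, by norm_num⟩).1
      rw [hφ1] at h4; norm_num at h4; linarith
    · intro y hy
      have := h y hy
      rw [hφ1] at this; linarith
  have hL : ∀ y ∈ Set.Icc (-1:ℝ) (-1/4), φ y = 1 + y := by
    have hsub : Set.Icc (-1:ℝ) (-1/4) ⊆ Set.Icc (-1:ℝ) 1 := Icc_subset_Icc le_rfl (by norm_num)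
    have hsub' : Set.Ioo (-1:ℝ) (-1/4) ⊆ Set.Ioo (-1:ℝ) 1 := Ioo_subset_Ioo le_rfl (by norm_num)
    have h := affine_of_abs_deriv_one φ (-1) (-1/4) (by norm_num)
      (hφc.mono hsub) (fun y hy => hφdiff y (hsub' hy)) (hφdc.mono hsub')
      (fun y hy => by
        have := hφ' y (hsub (Ioo_subset_Icc_self hy)) (by
          rw [abs_of_neg (by linarith [hy.2] : y < (0:ℝ))]; linarith [hy.2])
        rcases abs_eq (by norm_num : (0:ℝ) ≤ 1) |>.mp this with h | h
        · exact Or.inl h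
        · exact Or.inr h)
    rcases h with h | h
    · intro y hy
      have hm : φ (-1) = φ (-1/4) + (-1 - (-1/4)) := h (-1) ⟨le_rfl, by norm_num⟩
      rw [hφm1] at hm
      have := h y hy
      linarith
    · exfalso
      have hm : φ (-1) = φ (-1/4) - (-1 - (-1/4)) := h (-1) ⟨le_rfl, by norm_num⟩
      rw [hφm1] at hm
      have := (hφrange (-1/4) ⟨by norm_num, by norm_num⟩).1
      linarith
  -- vanishing of derivatives of χ off the transition region
  have hz0 := deriv2_zero_of_const_on χ 0 (Set.Ioo (-1/3:ℝ) (1/3)) isOpen_Ioo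
    (fun y hy => hχ0 y ⟨by linarith [hy.1], by linarith [hy.2]⟩
      (abs_le.mpr ⟨by linarith [hy.1], by linarith [hy.2]⟩))
  have hz1 := deriv2_zero_of_const_on χ 1 (Set.Ioo (2/3:ℝ) 1) isOpen_Ioo
    (fun y hy => hχ1 y ⟨by linarith [hy.1], le_of_lt hy.2⟩
      (by rw [abs_of_pos (by linarith [hy.1] : (0:ℝ) < y)]; exact le_of_lt hy.1))
  have hz2 := deriv2_zero_of_const_on χ 1 (Set.Ioo (-1:ℝ) (-2/3)) isOpen_Ioo
    (fun y hy => hχ1 y ⟨le_of_lt hy.1, by linarith [hy.2]⟩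
      (by rw [abs_of_neg (by linarith [hy.2] : y < (0:ℝ))]; linarith [hy.2]))
  -- main body
  refine ⟨Real.sqrt (2 * (11552 * M ^ 2)), Real.sqrt_pos.mpr (by nlinarith [hM]), ?_⟩
  intro ε hε V hV hInt
  set s := Real.sqrt ε with hsdef
  have hs : 0 < s := Real.sqrt_pos.mpr hε.1
  set f : ℝ → ℝ := blSource χ φ V ε with hfdef
  set g : ℝ → ℝ := fun z => (1 + z ^ 2) ^ 3 * (V z) ^ 2 + (1 + z ^ 2) ^ 3 * (deriv V z) ^ 2
    with hgdef
  have hg0 : ∀ z, 0 ≤ g z := fun z => by positivity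
  have h0 := hInt 0 (by norm_num)
  have h1 := hInt 1 (by norm_num)
  simp only [iteratedDeriv_zero] at h0
  simp only [iteratedDeriv_one] at h1
  have hgint : IntegrableOn g (Set.Ioi (0:ℝ)) := h0.add h1
  have hI0 : 0 ≤ ∫ z in Set.Ioi (0:ℝ), g z :=
    setIntegral_nonneg measurableSet_Ioi (fun z _ => hg0 z)
  have hsum : (∑ α ∈ Finset.range 2,
      ∫ z in Set.Ioi (0:ℝ), (1 + z ^ 2) ^ 3 * (iteratedDeriv α V z) ^ 2)
      = ∫ z in Set.Ioi (0:ℝ), g z := by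
    rw [Finset.sum_range_succ, Finset.sum_range_one]
    simp only [iteratedDeriv_zero, iteratedDeriv_one]
    rw [← integral_add h0 h1]
  have hVc : ContinuousOn V (Set.Ici (0:ℝ)) := hV.continuousOn
  have hV'c : ContinuousOn (deriv V) (Set.Ioi (0:ℝ)) :=
    (hV.mono Ioi_subset_Ici_self).continuousOn_deriv_of_isOpen isOpen_Ioi le_rfl
  have hgc : ContinuousOn g (Set.Ioi (0:ℝ)) := by
    have hpoly : Continuous fun z : ℝ => (1 + z ^ 2) ^ 3 := ((continuous_const.add (continuous_pow 2)).pow 3)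
    exact (hpoly.continuousOn.mul ((hVc.mono Ioi_subset_Ici_self).pow 2)).add
      (hpoly.continuousOn.mul (hV'c.pow 2))
  -- f vanishes outside the transition region
  have hf0 : ∀ y, (y ∈ Set.Icc (-1:ℝ) (-7/10) ∨ y ∈ Set.Icc (-3/10:ℝ) (3/10) ∨
      y ∈ Set.Icc (7/10:ℝ) 1) → f y = 0 := by
    intro y hy
    rcases hy with hy | hy | hy
    · by_cases h1' : y = -1
      · subst h1'; simp [hfdef, blSource, hφm1]
      · have hmem : y ∈ Set.Ioo (-1:ℝ) (-2/3) :=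
          ⟨lt_of_le_of_ne hy.1 (Ne.symm h1'), by linarith [hy.2]⟩
        obtain ⟨hd1, hd2⟩ := hz2 y hmem
        simp [hfdef, blSource, hd1, hd2]
    · have hmem : y ∈ Set.Ioo (-1/3:ℝ) (1/3) := ⟨by linarith [hy.1], by linarith [hy.2]⟩
      obtain ⟨hd1, hd2⟩ := hz0 y hmem
      simp [hfdef, blSource, hd1, hd2]
    · by_cases h1' : y = 1
      · subst h1'; simp [hfdef, blSource, hφ1]
      · have hmem : y ∈ Set.Ioo (2/3:ℝ) 1 := ⟨by linarith [hy.1], lt_of_le_of_ne hy.2 h1'⟩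
        obtain ⟨hd1, hd2⟩ := hz1 y hmem
        simp [hfdef, blSource, hd1, hd2]
  -- pointwise bound on the transition region
  have hb : ∀ y ∈ Set.Icc (3/10:ℝ) (7/10),
      f y ^ 2 ≤ 11552 * M ^ 2 * g ((1 - y) / s) ∧
      f (-y) ^ 2 ≤ 11552 * M ^ 2 * g ((1 - y) / s) := by
    intro y hy
    have hy1 : (3/10:ℝ) ≤ y := hy.1
    have hy2 : y ≤ (7/10:ℝ) := hy.2
    have hyI : y ∈ Set.Icc (-1:ℝ) 1 := ⟨by linarith, by linarith⟩
    have hyI' : -y ∈ Set.Icc (-1:ℝ) 1 := ⟨by linarith, by linarith⟩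
    have hφy : φ y = 1 - y := hR y ⟨by linarith, by linarith⟩
    have hφy' : φ (-y) = 1 - y := by
      have := hL (-y) ⟨by linarith, by linarith⟩; linarith
    have hDy : |deriv φ y| ≤ 1 :=
      le_of_eq (hφ' y hyI (by rw [abs_of_pos (by linarith : (0:ℝ) < y)]; linarith))
    have hDy' : |deriv φ (-y)| ≤ 1 :=
      le_of_eq (hφ' (-y) hyI' (by rw [abs_neg, abs_of_pos (by linarith : (0:ℝ) < y)]; linarith))
    obtain ⟨hB1, hA1⟩ := hMd y ⟨by linarith, hy2⟩
    obtain ⟨hB1', hA1'⟩ := hMd (-y) ⟨by linarith, by linarith⟩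
    constructor
    · have h := sq_bound (iteratedDeriv 2 χ y) (deriv χ y) (deriv φ y) (φ y)
        (V (φ y / s)) (deriv V (φ y / s)) M (φ y / s) hM hA1 hB1 hDy
        (by rw [hφy]; linarith) (div_nonneg (by rw [hφy]; linarith) hs.le)
      have h' : f y ^ 2 ≤ 11552 * M ^ 2 * g (φ y / s) := h
      rw [hφy] at h'
      exact h'
    · have h := sq_bound (iteratedDeriv 2 χ (-y)) (deriv χ (-y)) (deriv φ (-y)) (φ (-y))
        (V (φ (-y) / s)) (deriv V (φ (-y) / s)) M (φ (-y) / s) hM hA1' hB1' hDy'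
        (by rw [hφy']; linarith) (div_nonneg (by rw [hφy']; linarith) hs.le)
      have h' : f (-y) ^ 2 ≤ 11552 * M ^ 2 * g (φ (-y) / s) := h
      rw [hφy'] at h'
      exact h'
  -- continuity of f on the transition region
  have hkey : ∀ S : Set ℝ, S ⊆ Set.Ioo (-1:ℝ) 1 → (∀ y ∈ S, 3/10 ≤ φ y) →
      ContinuousOn f S := by
    intro S hS hφS
    have hφS0 : ∀ y ∈ S, φ y ≠ 0 := fun y hy => ne_of_gt (by linarith [hφS y hy])
    have hφSc : ContinuousOn φ S := hφc.mono (hS.trans hIoo)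
    have hc1 : ContinuousOn (fun y => φ y / s) S := hφSc.div_const s
    have hmaps : Set.MapsTo (fun y => φ y / s) S (Set.Ioi (0:ℝ)) := fun y hy =>
      div_pos (by linarith [hφS y hy]) hs
    have hVcomp : ContinuousOn (fun y => V (φ y / s)) S :=
      hVc.comp hc1 (fun y hy => Set.mem_Ici.mpr (le_of_lt (hmaps hy)))
    have hV'comp : ContinuousOn (fun y => deriv V (φ y / s)) S := hV'c.comp hc1 hmaps
    have t1 : ContinuousOn
        (fun y => -(iteratedDeriv 2 χ y / φ y ^ 2) * (φ y / s) ^ 2 * V (φ y / s)) S :=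
      (((hχd2.mono hS).div (hφSc.pow 2)
        (fun y hy => pow_ne_zero 2 (hφS0 y hy))).neg.mul (hc1.pow 2)).mul hVcomp
    have t2 : ContinuousOn
        (fun y => 2 * (deriv χ y / φ y ^ 3) * deriv φ y * (φ y / s) ^ 3 *
          deriv V (φ y / s)) S :=
      ((((continuousOn_const.mul ((hχd1.mono hS).div (hφSc.pow 3)
        (fun y hy => pow_ne_zero 3 (hφS0 y hy)))).mul (hφdc.mono hS)).mul
        (hc1.pow 3)).mul hV'comp)
    exact t1.sub t2
  have hS1sub : Set.Icc (3/10:ℝ) (7/10) ⊆ Set.Ioo (-1:ℝ) 1 := fun y hy =>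
    ⟨by linarith [hy.1], by linarith [hy.2]⟩
  have hS2sub : Set.Icc (-7/10:ℝ) (-3/10) ⊆ Set.Ioo (-1:ℝ) 1 := fun y hy =>
    ⟨by linarith [hy.1], by linarith [hy.2]⟩
  have hcont1 : ContinuousOn f (Set.Icc (3/10:ℝ) (7/10)) := hkey _ hS1sub (fun y hy => by
    rw [hR y ⟨by linarith [hy.1], by linarith [hy.2]⟩]; linarith [hy.2])
  have hcont2 : ContinuousOn f (Set.Icc (-7/10:ℝ) (-3/10)) := hkey _ hS2sub (fun y hy => by
    rw [hL y ⟨by linarith [hy.1], by linarith [hy.2]⟩]; linarith [hy.1])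
  have i4 : IntervalIntegrable (fun y => f y ^ 2) volume (3/10) (7/10) := by
    apply ContinuousOn.intervalIntegrable
    rw [Set.uIcc_of_le (by norm_num)]
    exact hcont1.pow 2
  have i2 : IntervalIntegrable (fun y => f y ^ 2) volume (-7/10) (-3/10) := by
    apply ContinuousOn.intervalIntegrable
    rw [Set.uIcc_of_le (by norm_num)]
    exact hcont2.pow 2
  have izero : ∀ p q : ℝ, p ≤ q → (∀ y ∈ Set.Icc p q, f y = 0) →
      IntervalIntegrable (fun y => f y ^ 2) volume p q ∧ (∫ y in p..q, f y ^ 2) = 0 := by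
    intro p q hpq h0'
    have hEq : Set.EqOn (fun y => f y ^ 2) (fun _ => (0:ℝ)) (Set.Icc p q) := fun y hy => by
      simp [h0' y hy]
    constructor
    · rw [intervalIntegrable_iff]
      refine (integrableOn_congr_fun (hEq.mono ?_) measurableSet_uIoc).mpr integrableOn_zero
      rw [Set.uIoc_of_le hpq]
      exact Ioc_subset_Icc_self
    · rw [intervalIntegral.integral_congr (hEq.mono (by rw [Set.uIcc_of_le hpq]))]
      simp
  obtain ⟨i1, e1⟩ := izero (-1) (-7/10) (by norm_num) (fun y hy => hf0 y (Or.inl hy))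
  obtain ⟨i3, e3⟩ := izero (-3/10) (3/10) (by norm_num) (fun y hy => hf0 y (Or.inr (Or.inl hy)))
  obtain ⟨i5, e5⟩ := izero (7/10) 1 (by norm_num) (fun y hy => hf0 y (Or.inr (Or.inr hy)))
  have hsplit : (∫ y in (-1:ℝ)..1, f y ^ 2)
      = (∫ y in (-1:ℝ)..(-7/10), f y ^ 2) + (∫ y in (-7/10:ℝ)..(-3/10), f y ^ 2)
        + (∫ y in (-3/10:ℝ)..(3/10), f y ^ 2) + (∫ y in (3/10:ℝ)..(7/10), f y ^ 2)
        + (∫ y in (7/10:ℝ)..1, f y ^ 2) := by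
    have h45 := intervalIntegral.integral_add_adjacent_intervals i4 i5
    have h345 := intervalIntegral.integral_add_adjacent_intervals i3 (i4.trans i5)
    have h2345 := intervalIntegral.integral_add_adjacent_intervals i2 (i3.trans (i4.trans i5))
    have h12345 := intervalIntegral.integral_add_adjacent_intervals i1
      (i2.trans (i3.trans (i4.trans i5)))
    linarith [h45, h345, h2345, h12345]
  -- change of variables
  have hs' : s ≠ 0 := ne_of_gt hs
  have hCoV : (∫ y in (3/10:ℝ)..(7/10), g ((1 - y) / s))
      = s * ∫ z in ((3/10)/s)..((7/10)/s), g z := by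
    have h := intervalIntegral.mul_integral_comp_mul_add (a := (3/10:ℝ)) (b := 7/10)
      (f := g) (c := -s⁻¹) (d := s⁻¹)
    have harg : ∀ y : ℝ, -s⁻¹ * y + s⁻¹ = (1 - y)/s := by
      intro y; field_simp; ring
    simp only [harg] at h
    rw [show ((1:ℝ) - 3/10)/s = (7/10)/s by norm_num,
      show ((1:ℝ) - 7/10)/s = (3/10)/s by norm_num,
      intervalIntegral.integral_symm ((3:ℝ)/10/s) ((7:ℝ)/10/s)] at h
    have h2 : s⁻¹ * ∫ y in (3/10:ℝ)..(7/10), g ((1 - y)/s)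
        = ∫ z in ((3/10)/s)..((7/10)/s), g z := by linarith [h]
    calc (∫ y in (3/10:ℝ)..(7/10), g ((1 - y) / s))
        = s * (s⁻¹ * ∫ y in (3/10:ℝ)..(7/10), g ((1 - y)/s)) := by
          field_simp
      _ = s * ∫ z in ((3/10)/s)..((7/10)/s), g z := by rw [h2]
  have hIle : ((3:ℝ)/10)/s ≤ ((7:ℝ)/10)/s := by gcongr; norm_num
  have hmono : (∫ z in ((3/10)/s)..((7/10)/s), g z) ≤ ∫ z in Set.Ioi (0:ℝ), g z := by
    rw [intervalIntegral.integral_of_le hIle]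
    refine setIntegral_mono_set hgint (Filter.Eventually.of_forall hg0) ?_
    have hss : Set.Ioc ((3/10)/s) ((7/10)/s) ⊆ Set.Ioi (0:ℝ) := fun z hz =>
      lt_trans (by positivity) hz.1
    exact hss.eventuallyLE
  have hgcomp : ContinuousOn (fun y => g ((1 - y)/s)) (Set.Icc (3/10:ℝ) (7/10)) := by
    refine hgc.comp ((continuous_const.sub continuous_id).div_const s).continuousOn ?_
    intro y hy
    have : (0:ℝ) < (1 - y) / s := div_pos (by linarith [hy.2]) hs
    simpa using this
  have ig : IntervalIntegrable (fun y => 11552 * M ^ 2 * g ((1 - y)/s)) volume (3/10) (7/10) := by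
    apply ContinuousOn.intervalIntegrable
    rw [Set.uIcc_of_le (by norm_num)]
    exact continuousOn_const.mul hgcomp
  have hchain : (∫ y in (3/10:ℝ)..(7/10), 11552 * M ^ 2 * g ((1 - y)/s))
      ≤ 11552 * M ^ 2 * (s * ∫ z in Set.Ioi (0:ℝ), g z) := by
    rw [intervalIntegral.integral_const_mul, hCoV]
    have h1 : (0:ℝ) ≤ 11552 * M ^ 2 := by positivity
    exact mul_le_mul_of_nonneg_left (mul_le_mul_of_nonneg_left hmono hs.le) h1
  have hright : (∫ y in (3/10:ℝ)..(7/10), f y ^ 2)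
      ≤ 11552 * M ^ 2 * (s * ∫ z in Set.Ioi (0:ℝ), g z) :=
    le_trans (intervalIntegral.integral_mono_on (by norm_num) i4 ig
      (fun y hy => (hb y hy).1)) hchain
  have i2' : IntervalIntegrable (fun y => f (-y) ^ 2) volume (3/10) (7/10) := by
    apply ContinuousOn.intervalIntegrable
    rw [Set.uIcc_of_le (by norm_num)]
    exact ((hcont2.comp continuous_neg.continuousOn
      (fun y hy => ⟨by linarith [hy.2], by linarith [hy.1]⟩)).pow 2)
  have hneg : (∫ y in (-7/10:ℝ)..(-3/10), f y ^ 2) = ∫ y in (3/10:ℝ)..(7/10), f (-y) ^ 2 := by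
    have h := intervalIntegral.integral_comp_neg (a := (3/10:ℝ)) (b := (7/10:ℝ))
      (fun x => f x ^ 2)
    rw [h, show (-(7/10):ℝ) = -7/10 by norm_num, show (-(3/10):ℝ) = -3/10 by norm_num]
  have hleft : (∫ y in (-7/10:ℝ)..(-3/10), f y ^ 2)
      ≤ 11552 * M ^ 2 * (s * ∫ z in Set.Ioi (0:ℝ), g z) := by
    rw [hneg]
    exact le_trans (intervalIntegral.integral_mono_on (by norm_num) i2' ig
      (fun y hy => (hb y hy).2)) hchain
  have htot : (∫ y in (-1:ℝ)..1, f y ^ 2)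
      ≤ 2 * (11552 * M ^ 2) * (s * ∫ z in Set.Ioi (0:ℝ), g z) := by
    rw [hsplit, e1, e3, e5]
    linarith [hright, hleft]
  have hsqrt_s : Real.sqrt s = ε ^ ((1:ℝ)/4) := by
    rw [hsdef, Real.sqrt_eq_rpow, Real.sqrt_eq_rpow, ← Real.rpow_mul hε.1.le]
    norm_num
  calc Real.sqrt (∫ y in (-1:ℝ)..1, f y ^ 2)
      ≤ Real.sqrt (2 * (11552 * M ^ 2) * (s * ∫ z in Set.Ioi (0:ℝ), g z)) :=
        Real.sqrt_le_sqrt htot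
    _ = Real.sqrt (2 * (11552 * M ^ 2)) * Real.sqrt (s * ∫ z in Set.Ioi (0:ℝ), g z) :=
        Real.sqrt_mul (by positivity) _
    _ = Real.sqrt (2 * (11552 * M ^ 2)) *
        (Real.sqrt s * Real.sqrt (∫ z in Set.Ioi (0:ℝ), g z)) := by
        rw [Real.sqrt_mul hs.le]
    _ = Real.sqrt (2 * (11552 * M ^ 2)) * ε ^ ((1:ℝ)/4) *
        Real.sqrt (∑ α ∈ Finset.range 2,
          ∫ z in Set.Ioi (0:ℝ), (1 + z ^ 2) ^ 3 * (iteratedDeriv α V z) ^ 2) := by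
        rw [hsqrt_s, hsum]; ring
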